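/- arXiv:1805.01400 — 2 statements merged into one kernel-verified Lean document; each statement's English description precedes it below -/
import Mathlib

section
/- Assume q is odd and let n ≥ 1. If u ∈ k^× is not a square in k^×, then Kl_u^{n+1}(ψ; (2,…,2,1,1), (𝟙,…,𝟙,ω₀)) = 0, where the weight vector (2,…,2,1,1) has n−1 entries equal to 2 followed by two entries equal to 1, and the character vector consists of n trivial characters followed by ω₀. (Vanishing lemma for the Kloosterman sums arising from characters of simple supercuspidal representations of symplectic groups.) -/
open scoped BigOperators

/-- The Kloosterman sum `Kl_u^{r}(ψ; (k₁,…,k_r), (χ₁,…,χ_r))` attached to a finite field `k`,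
a nontrivial additive character `ψ` of `k`, weights `w` and multiplicative characters `χs`:
the sum of `ψ(x₁+⋯+x_r)·χ₁(x₁)⋯χ_r(x_r)` over all `(x₁,…,x_r) ∈ (k^×)^r`
with `x₁^{k₁}⋯x_r^{k_r} = u`. -/
noncomputable def Kl {k : Type*} [Field k] [Fintype k] [DecidableEq k]
    (ψ : AddChar k ℂ) {r : ℕ} (w : Fin r → ℕ) (χs : Fin r → MulChar k ℂ) (u : kˣ) : ℂ :=
  ∑ x : Fin r → kˣ,
    if ∏ i, x i ^ w i = u then ψ (∑ i, ((x i : k))) * ∏ i, χs i ((x i : k)) else 0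

/-- Any value of a character squaring to `1` on a unit is `±1`. -/
lemma omega_pm {k : Type*} [Field k] [Fintype k] [DecidableEq k]
    (ω₀ : MulChar k ℂ) (hω₂ : ω₀ ^ 2 = 1) (v : kˣ) :
    ω₀ (v : k) = 1 ∨ ω₀ (v : k) = -1 := by
  have h : ω₀ (v : k) * ω₀ (v : k) = 1 := by
    have h1 := congrArg (fun χ : MulChar k ℂ => χ (v : k)) hω₂
    simpa [pow_two, MulChar.mul_apply, MulChar.one_apply_coe] using h1
  exact mul_self_eq_one_iff.mp h

/-- A nontrivial character squaring to `1` takes value `-1` on nonsquare units. -/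
lemma omega_nonsquare {k : Type*} [Field k] [Fintype k] [DecidableEq k]
    (ω₀ : MulChar k ℂ) (hω₂ : ω₀ ^ 2 = 1) (hω₁ : ω₀ ≠ 1)
    (v : kˣ) (hv : ¬ IsSquare v) : ω₀ (v : k) = -1 := by
  obtain ⟨g, hg⟩ := IsCyclic.exists_generator (α := kˣ)
  have hgm1 : ω₀ (g : k) = -1 := by
    rcases omega_pm ω₀ hω₂ g with h | h
    · exfalso
      apply hω₁
      apply MulChar.ext
      intro x
      obtain ⟨m, hm⟩ := mem_powers_iff_mem_zpowers.mpr (hg x)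
      rw [← hm, MulChar.one_apply_coe]
      push_cast
      rw [map_pow, h, one_pow]
    · exact h
  obtain ⟨m, hm⟩ := mem_powers_iff_mem_zpowers.mpr (hg v)
  rcases Nat.even_or_odd m with he | ho
  · exfalso
    apply hv
    obtain ⟨c, rfl⟩ := he
    exact ⟨g ^ c, by rw [← hm, ← pow_add]⟩
  · rw [← hm]
    push_cast
    rw [map_pow, hgm1, ho.neg_one_pow]

open Finset in
/-- Vanishing of a Kloosterman sum via the swap involution on two weight-one coordinates,
one carrying the quadratic character and the other the trivial one. -/
lemma kl_swap_vanish {k : Type*} [Field k] [Fintype k] [DecidableEq k]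
    (ψ : AddChar k ℂ) (ω₀ : MulChar k ℂ) (hω₂ : ω₀ ^ 2 = 1) (hω₁ : ω₀ ≠ 1)
    {r : ℕ} (w : Fin r → ℕ) (χs : Fin r → MulChar k ℂ)
    (a b : Fin r) (hab : a ≠ b)
    (hwa : w a = 1) (hwb : w b = 1) (hwo : ∀ i, i ≠ a → i ≠ b → w i = 2)
    (hχb : χs b = ω₀) (hχo : ∀ i, i ≠ b → χs i = 1)
    (u : kˣ) (hu : ¬ IsSquare u) :
    Kl ψ w χs u = 0 := by
  classical
  set f : (Fin r → kˣ) → ℂ := fun x =>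
    if ∏ i, x i ^ w i = u then ψ (∑ i, ((x i : k))) * ∏ i, χs i ((x i : k)) else 0 with hf
  have hKl : Kl ψ w χs u = ∑ x : Fin r → kˣ, f x := rfl
  -- the character product picks out only the `b` coordinate
  have hprod : ∀ y : Fin r → kˣ, ∏ i, χs i ((y i : k)) = ω₀ ((y b : k)) := by
    intro y
    rw [Fintype.prod_eq_single b (fun i hib => by rw [hχo i hib, MulChar.one_apply_coe]), hχb]
  -- the constraint forces `x a * x b` to be a nonsquare
  have hkey : ∀ x : Fin r → kˣ, (∏ i, x i ^ w i = u) →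
      ∃ t : kˣ, u = (x a * x b) * t ^ 2 := by
    intro x hx
    refine ⟨∏ i ∈ (univ.erase a).erase b, x i, ?_⟩
    rw [← hx,
      ← Finset.mul_prod_erase Finset.univ (fun i => x i ^ w i) (Finset.mem_univ a),
      ← Finset.mul_prod_erase (Finset.univ.erase a) (fun i => x i ^ w i)
        (Finset.mem_erase.mpr ⟨hab.symm, Finset.mem_univ b⟩)]
    have hrest : ∏ i ∈ (univ.erase a).erase b, x i ^ w i
        = (∏ i ∈ (univ.erase a).erase b, x i) ^ 2 := by
      rw [← Finset.prod_pow]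
      refine Finset.prod_congr rfl fun i hi => ?_
      simp only [Finset.mem_erase] at hi
      rw [hwo i hi.2.1 hi.1]
    rw [hwa, hwb, pow_one, pow_one, hrest, mul_assoc]
  have hns : ∀ x : Fin r → kˣ, (∏ i, x i ^ w i = u) →
      ω₀ ((x a : k)) = - ω₀ ((x b : k)) := by
    intro x hx
    obtain ⟨t, ht⟩ := hkey x hx
    have h1 : ¬ IsSquare (x a * x b) := by
      rintro ⟨c, hc⟩
      exact hu ⟨c * t, by rw [ht, hc, pow_two]; exact mul_mul_mul_comm c c t t⟩
    have h2 : ω₀ ((x a : k)) * ω₀ ((x b : k)) = -1 := by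
      rw [← map_mul]
      have h3 := omega_nonsquare ω₀ hω₂ hω₁ (x a * x b) h1
      simpa using h3
    have hb2 : ω₀ ((x b : k)) * ω₀ ((x b : k)) = 1 := by
      rcases omega_pm ω₀ hω₂ (x b) with h | h <;> rw [h] <;> ring
    calc ω₀ ((x a : k)) = ω₀ ((x a : k)) * (ω₀ ((x b : k)) * ω₀ ((x b : k))) := by
          rw [hb2, mul_one]
      _ = (ω₀ ((x a : k)) * ω₀ ((x b : k))) * ω₀ ((x b : k)) := by ring
      _ = - ω₀ ((x b : k)) := by rw [h2]; ring
  -- the swap only permutes the weights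
  have hσw : ∀ i, w (Equiv.swap a b i) = w i := by
    intro i
    rcases eq_or_ne i a with rfl | hia
    · rw [Equiv.swap_apply_left, hwb, hwa]
    rcases eq_or_ne i b with rfl | hib
    · rw [Equiv.swap_apply_right, hwa, hwb]
    · rw [Equiv.swap_apply_of_ne_of_ne hia hib]
  have hcon : ∀ x : Fin r → kˣ,
      ∏ i, x (Equiv.swap a b i) ^ w i = ∏ i, x i ^ w i := by
    intro x
    calc ∏ i, x (Equiv.swap a b i) ^ w i
        = ∏ i, x (Equiv.swap a b i) ^ w (Equiv.swap a b i) :=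
          Finset.prod_congr rfl fun i _ => by rw [hσw]
      _ = ∏ i, x i ^ w i := Equiv.prod_comp (Equiv.swap a b) (fun i => x i ^ w i)
  -- the involution
  let e : (Fin r → kˣ) ≃ (Fin r → kˣ) :=
    { toFun := fun x => x ∘ Equiv.swap a b
      invFun := fun x => x ∘ Equiv.swap a b
      left_inv := fun x => by funext i; simp [Function.comp]
      right_inv := fun x => by funext i; simp [Function.comp] }
  have hneg : ∀ x : Fin r → kˣ, f (e x) = - f x := by
    intro x
    show (if ∏ i, x (Equiv.swap a b i) ^ w i = u then
        ψ (∑ i, ((x (Equiv.swap a b i) : k))) *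
          ∏ i, χs i ((x (Equiv.swap a b i) : k)) else 0) = - f x
    rw [hf]
    simp only [hcon x]
    by_cases h : ∏ i, x i ^ w i = u
    · rw [if_pos h, if_pos h, hprod, hprod,
        Equiv.sum_comp (Equiv.swap a b) (fun i => ((x i : k))),
        Equiv.swap_apply_right, hns x h, mul_neg]
    · rw [if_neg h, if_neg h, neg_zero]
  have hS : ∑ x : Fin r → kˣ, f x = - ∑ x : Fin r → kˣ, f x := by
    conv_lhs => rw [← Equiv.sum_comp e f]
    rw [← Finset.sum_neg_distrib]
    exact Finset.sum_congr rfl fun x _ => hneg x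
  rw [hKl]
  exact CharZero.eq_neg_self_iff.mp hS

/-- **Vanishing of the Kloosterman sums arising from characters of simple supercuspidal
representations of symplectic groups.** Assume `q` odd, `n ≥ 1` and let `ω₀` be the unique
quadratic character of `k^×`. If `u ∈ k^×` is not a square, then
`Kl_u^{n+1}(ψ; (2,…,2,1,1), (𝟙,…,𝟙,ω₀)) = 0`, where the weight vector has `n−1` entries `2`
followed by two entries `1`, and the character vector has `n` trivial characters followed
by `ω₀`. -/
theorem kloosterman_vanishing_nonsquare {k : Type*} [Field k] [Fintype k] [DecidableEq k]
    (hq : Odd (Fintype.card k))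
    (ψ : AddChar k ℂ) (hψ : ∃ a : k, ψ a ≠ 1)
    (n : ℕ) (hn : 1 ≤ n)
    (ω₀ : MulChar k ℂ) (hω₂ : ω₀ ^ 2 = 1) (hω₁ : ω₀ ≠ 1)
    (u : kˣ) (hu : ¬ IsSquare u) :
    Kl ψ (fun i : Fin (n + 1) => if (i : ℕ) < n - 1 then 2 else 1)
      (fun i : Fin (n + 1) => if (i : ℕ) < n then 1 else ω₀) u = 0 := by
  have hn1 : n - 1 < n + 1 := by omega
  have hnn : n < n + 1 := by omega
  refine kl_swap_vanish ψ ω₀ hω₂ hω₁ _ _ ⟨n - 1, hn1⟩ ⟨n, hnn⟩ ?_ ?_ ?_ ?_ ?_ ?_ u hu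
  · simp only [ne_eq, Fin.mk.injEq]
    omega
  · simp
  · simp
  · intro i hia hib
    have h1 : (i : ℕ) ≠ n - 1 := fun h => hia (Fin.ext h)
    have h2 : (i : ℕ) ≠ n := fun h => hib (Fin.ext h)
    have h3 : (i : ℕ) < n - 1 := by have := i.isLt; omega
    simp [h3]
  · simp
  · intro i hib
    have h2 : (i : ℕ) ≠ n := fun h => hib (Fin.ext h)
    have h3 : (i : ℕ) < n := by have := i.isLt; omega
    simp [h3]
end

section
/- Assume q is odd and let n ≥ 1. For all a, b, h₀, h₁, …, h_n ∈ k^×, Σ_{(t₁,…,t_n)∈(k^×)^n} ψ( Σ_{i=1}^{n−1} (t_i/t_{i+1})·h_i + b·t_n²·h_n + a·h₀·t₁^{−2} ) = Kl_α^{n+1}(ψ; (2,…,2,1,1)) + ω₀(a·h₀)·Kl_α^{n+1}(ψ; (2,…,2,1,1), (𝟙,…,𝟙,ω₀)), where α := a·b·h₁²⋯h_{n−1}²·h_n·h₀, the weight vector (2,…,2,1,1) has n−1 entries equal to 2 followed by two entries equal to 1, and the character vector consists of n trivial characters followed by ω₀. (This finite-field identity is the computation underlying the character values of simple supercuspidal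 representations of Sp_{2n} at affine generic elements; it equals twice the sum over T_{Sp_{2n}}(q)/{±1} in the paper's Proposition.) -/
open scoped BigOperators

/-!
Substitute `xᵢ = (tᵢ / tᵢ₊₁) hᵢ` for `i < n`, `xₙ = b tₙ² hₙ` and `xₙ₊₁ = a h₀ / t₁²`. The phase
becomes `ψ(x₁ + ⋯ + xₙ₊₁)`, the ratios telescope to give `x₁² ⋯ xₙ₋₁² xₙ xₙ₊₁ = α`, and `t` is
recovered from `x` and `s = t₁` by partial products. So `t ↦ (x, t₁)` is a bijection onto the pairs
with `∏ xᵢ^{wᵢ} = α` and `s² = a h₀ / xₙ₊₁`, and each admissible `x` is hit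
`#{s | s² = a h₀ / xₙ₊₁} = 1 + ω₀(a h₀) ω₀(xₙ₊₁)` times; the two summands are the two
Kloosterman sums.
-/

open Finset

theorem Fin.prod_univ_castSucc_div_succ {G : Type*} [CommGroup G] {n : ℕ} (f : Fin (n + 1) → G) :
    ∏ i : Fin n, f i.castSucc / f i.succ = f 0 / f (Fin.last n) := by
  induction n with
  | zero => simp
  | succ n ih =>
    rw [Fin.prod_univ_castSucc]
    simp only [Fin.succ_castSucc, ih (fun i => f i.castSucc), Fin.castSucc_zero, Fin.succ_last]
    exact div_mul_div_cancel _ _ _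

theorem Fin.partialProd_last {M : Type*} [CommMonoid M] {n : ℕ} (f : Fin n → M) :
    Fin.partialProd f (Fin.last n) = ∏ i, f i := by
  rw [Fin.partialProd, Fin.val_last, List.take_of_length_le (List.length_ofFn).le, List.prod_ofFn]

section Coordinates

variable {G : Type*} [CommGroup G] {m : ℕ}

def spWeights (m : ℕ) : Fin (m + 2) → ℕ := fun i => if (i : ℕ) < m then 2 else 1

theorem prod_pow_spWeights (x : Fin (m + 2) → G) :
    ∏ i, x i ^ spWeights m i =
      (∏ i : Fin m, x i.castSucc.castSucc ^ 2) * x (Fin.last m).castSucc *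
        x (Fin.last (m + 1)) := by
  simp [spWeights, Fin.prod_univ_castSucc]

-- The substitution above, 0-indexed with `m = n - 1` and `c = a h₀`.
def spCoords (b c : G) (h t : Fin (m + 1) → G) : Fin (m + 2) → G :=
  Fin.snoc (α := fun _ => G)
    (Fin.snoc (α := fun _ => G) (fun i : Fin m => t i.castSucc / t i.succ * h i.castSucc)
      (b * t (Fin.last m) ^ 2 * h (Fin.last m)))
    (c / t 0 ^ 2)

@[simp]
theorem spCoords_castSucc_castSucc (b c : G) (h t : Fin (m + 1) → G) (i : Fin m) :
    spCoords b c h t i.castSucc.castSucc = t i.castSucc / t i.succ * h i.castSucc := by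
  simp [spCoords]

@[simp]
theorem spCoords_castSucc_last (b c : G) (h t : Fin (m + 1) → G) :
    spCoords b c h t (Fin.last m).castSucc = b * t (Fin.last m) ^ 2 * h (Fin.last m) := by
  simp [spCoords]

@[simp]
theorem spCoords_last (b c : G) (h t : Fin (m + 1) → G) :
    spCoords b c h t (Fin.last (m + 1)) = c / t 0 ^ 2 := by
  simp [spCoords]

theorem prod_pow_spWeights_spCoords (b c : G) (h t : Fin (m + 1) → G) :
    ∏ i, spCoords b c h t i ^ spWeights m i =
      b * c * (∏ i : Fin m, h i.castSucc ^ 2) * h (Fin.last m) := by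
  rw [prod_pow_spWeights]
  simp only [spCoords_castSucc_castSucc, spCoords_castSucc_last, spCoords_last, mul_pow,
    prod_mul_distrib, prod_pow, Fin.prod_univ_castSucc_div_succ]
  apply Additive.ofMul.injective
  simp only [ofMul_mul, ofMul_div, ofMul_pow]
  abel

theorem spCoords_smul_partialProd {b c s : G} {h : Fin (m + 1) → G} {x : Fin (m + 2) → G}
    (hx : ∏ i, x i ^ spWeights m i = b * c * (∏ i : Fin m, h i.castSucc ^ 2) * h (Fin.last m))
    (hs : s ^ 2 = c / x (Fin.last (m + 1))) :
    spCoords b c h (s • Fin.partialProd fun i => h i.castSucc / x i.castSucc.castSucc) = x := by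
  have hlast : x (Fin.last (m + 1)) = c / s ^ 2 := by rw [hs, div_div_cancel]
  rw [prod_pow_spWeights, hlast] at hx
  funext i
  induction i using Fin.lastCases with
  | last => simp [hlast]
  | cast i =>
    induction i using Fin.lastCases with
    | last =>
      have hmid : x (Fin.last m).castSucc = b * c * (∏ i : Fin m, h i.castSucc ^ 2) *
          h (Fin.last m) / ((∏ i : Fin m, x i.castSucc.castSucc ^ 2) * (c / s ^ 2)) := by
        rw [eq_div_iff_mul_eq', ← hx, mul_right_comm, mul_comm]
      simp only [spCoords_castSucc_last, Pi.smul_apply, smul_eq_mul, Fin.partialProd_last,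
        prod_div_distrib, hmid, mul_pow, div_pow, prod_pow]
      apply Additive.ofMul.injective
      simp only [ofMul_mul, ofMul_div, ofMul_pow]
      abel
    | cast i =>
      simp only [spCoords_castSucc_castSucc, Pi.smul_apply, smul_eq_mul, Fin.partialProd_succ]
      apply Additive.ofMul.injective
      simp only [ofMul_mul, ofMul_div]
      abel

def spCoordsEquiv (b c : G) (h : Fin (m + 1) → G) :
    (Fin (m + 1) → G) ≃ {p : (Fin (m + 2) → G) × G //
      ∏ i, p.1 i ^ spWeights m i = b * c * (∏ i : Fin m, h i.castSucc ^ 2) * h (Fin.last m) ∧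
        p.2 ^ 2 = c / p.1 (Fin.last (m + 1))} where
  toFun t := ⟨(spCoords b c h t, t 0), prod_pow_spWeights_spCoords b c h t, by simp⟩
  invFun p := p.1.2 • Fin.partialProd fun i => h i.castSucc / p.1.1 i.castSucc.castSucc
  left_inv t := by
    have hratio : (fun i : Fin m => h i.castSucc / spCoords b c h t i.castSucc.castSucc) =
        fun i => (t i.castSucc)⁻¹ * t i.succ := by
      funext i
      rw [spCoords_castSucc_castSucc]
      apply Additive.ofMul.injective
      simp only [ofMul_mul, ofMul_div, ofMul_inv]
      abel
    simp only [hratio, Fin.partialProd_left_inv]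
  right_inv := by
    rintro ⟨⟨x, s⟩, hx, hs⟩
    exact Subtype.ext (Prod.ext (spCoords_smul_partialProd hx hs) (by simp))

theorem sum_comp_spCoords [Fintype G] [DecidableEq G] {M : Type*} [AddCommMonoid M] (b c : G)
    (h : Fin (m + 1) → G) (f : (Fin (m + 2) → G) → M) :
    ∑ t, f (spCoords b c h t) =
      ∑ x, if ∏ i, x i ^ spWeights m i = b * c * (∏ i : Fin m, h i.castSucc ^ 2) * h (Fin.last m)
        then #{s : G | s ^ 2 = c / x (Fin.last (m + 1))} • f x else 0 := by
  rw [Fintype.sum_equiv (spCoordsEquiv b c h) (fun t => f (spCoords b c h t)) (fun p => f p.1.1)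
      fun _ => rfl,
    ← sum_subtype _ (fun _ => mem_filter_univ _) (fun p : (Fin (m + 2) → G) × G => f p.1),
    sum_filter, Fintype.sum_prod_type]
  refine sum_congr rfl fun x _ => ?_
  split_ifs with hx
  · simp only [hx, true_and, ← sum_filter, sum_const]
  · simp only [hx, false_and, if_false, sum_const_zero]

end Coordinates

theorem sum_val_spCoords {k : Type*} [Field k] {m : ℕ} (b c : kˣ) (h t : Fin (m + 1) → kˣ) :
    ∑ i, ((spCoords b c h t i : kˣ) : k) =
      ∑ i : Fin m, (t i.castSucc : k) / t i.succ * h i.castSucc +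
        b * (t (Fin.last m) : k) ^ 2 * h (Fin.last m) + c / (t 0 : k) ^ 2 := by
  simp [Fin.sum_univ_castSucc]

theorem MulChar.apply_div_of_sq_eq_one {M R : Type*} [CommGroupWithZero M] [CommRing R]
    [IsDomain R] {ω : MulChar M R} (hω₂ : ω ^ 2 = 1) (c d : M) : ω (c / d) = ω c * ω d := by
  rw [div_eq_mul_inv, map_mul, ← MulChar.inv_apply',
    (MulChar.isQuadratic_iff_sq_eq_one.mpr hω₂).inv]

theorem FiniteField.ringChar_ne_two_of_odd_card {k : Type*} [Field k] [Fintype k]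
    (hq : Odd (Fintype.card k)) : ringChar k ≠ 2 := fun h2 =>
  Nat.not_even_iff_odd.mpr hq (Nat.even_iff.mpr (FiniteField.even_card_of_char_two h2))

section FiniteField

variable {k : Type*} [Field k] [Fintype k] [DecidableEq k]

theorem card_units_sq_eq (hF : ringChar k ≠ 2) (w : kˣ) :
    (#{s : kˣ | s ^ 2 = w} : ℤ) = quadraticChar k w + 1 := by
  rw [← quadraticChar_card_sqrts hF]
  congr 1
  refine card_bij (fun s _ => (s : k)) (fun s hs => ?_) (fun _ _ _ _ => Units.ext) fun x hx => ?_
  · simp_all [← Units.val_pow_eq_pow_val]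
  · simp only [Set.mem_toFinset, Set.mem_ofPred_eq] at hx
    have hx0 : x ≠ 0 := by rintro rfl; simp_all [eq_comm]
    exact ⟨Units.mk0 x hx0, by simp [Units.ext_iff, hx], rfl⟩

theorem MulChar.apply_eq_quadraticChar {R : Type*} [CommRing R] [IsDomain R] {ω : MulChar k R}
    (hω₂ : ω ^ 2 = 1) (hω₁ : ω ≠ 1) (a : k) :
    ω a = quadraticChar k a := by
  have hsq : ∀ d : k, d ≠ 0 → ω (d * d) = 1 := fun d hd => by
    rw [map_mul, ← pow_two, ← MulChar.pow_apply' ω two_ne_zero, hω₂, MulChar.one_apply hd.isUnit]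
  obtain ⟨v, hv⟩ := MulChar.ne_one_iff.mp hω₁
  have hv' : ω v = -1 :=
    (mul_self_eq_one_iff.mp (by rw [← map_mul]; exact hsq v v.ne_zero)).resolve_left hv
  have hvns : ¬IsSquare (v : k) := by
    rintro ⟨d, hd⟩
    exact hv (hd ▸ hsq d (by rintro rfl; simp at hd))
  rcases eq_or_ne a 0 with rfl | ha
  · simp
  by_cases has : IsSquare a
  · obtain ⟨d, rfl⟩ := has
    rw [hsq d (by rintro rfl; simp at ha), (quadraticChar_one_iff_isSquare ha).mpr ⟨d, rfl⟩]
    simp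
  · -- a product of two non-squares is a square
    obtain ⟨d, hd⟩ : IsSquare (a * v) := by
      rw [← quadraticChar_one_iff_isSquare (mul_ne_zero ha v.ne_zero), map_mul,
        quadraticChar_neg_one_iff_not_isSquare.mpr has,
        quadraticChar_neg_one_iff_not_isSquare.mpr hvns]
      rfl
    have hav : ω a * ω v = 1 := by
      rw [← map_mul, hd, hsq d (by rintro rfl; simp [ha] at hd)]
    rw [quadraticChar_neg_one_iff_not_isSquare.mpr has, Int.cast_neg, Int.cast_one]
    rw [hv'] at hav
    linear_combination -hav

theorem natCast_card_units_sq_eq {R : Type*} [CommRing R] [IsDomain R] (hF : ringChar k ≠ 2)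
    {ω : MulChar k R} (hω₂ : ω ^ 2 = 1) (hω₁ : ω ≠ 1) (w : kˣ) :
    (#{s : kˣ | s ^ 2 = w} : R) = ω w + 1 := by
  rw [MulChar.apply_eq_quadraticChar hω₂ hω₁, ← Int.cast_natCast, card_units_sq_eq hF]
  push_cast
  rfl

theorem sum_addChar_eq_Kl_add_Kl (hF : ringChar k ≠ 2) (ψ : AddChar k ℂ) {ω : MulChar k ℂ}
    (hω₂ : ω ^ 2 = 1) (hω₁ : ω ≠ 1) {m : ℕ} (a b h0 : kˣ) (h : Fin (m + 1) → kˣ) :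
    ∑ t : Fin (m + 1) → kˣ,
      ψ (∑ i : Fin m, (t i.castSucc : k) / t i.succ * h i.castSucc +
        b * (t (Fin.last m) : k) ^ 2 * h (Fin.last m) + a * h0 / (t 0 : k) ^ 2) =
    Kl ψ (spWeights m) (fun _ => 1)
        (a * b * (∏ i : Fin m, h i.castSucc ^ 2) * h (Fin.last m) * h0) +
      ω (a * h0) * Kl ψ (spWeights m) (fun i : Fin (m + 2) => if (i : ℕ) < m + 1 then 1 else ω)
        (a * b * (∏ i : Fin m, h i.castSucc ^ 2) * h (Fin.last m) * h0) := by
  have hα : a * b * (∏ i : Fin m, h i.castSucc ^ 2) * h (Fin.last m) * h0 =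
      b * (a * h0) * (∏ i : Fin m, h i.castSucc ^ 2) * h (Fin.last m) := by ac_rfl
  simp only [← Units.val_mul, ← sum_val_spCoords]
  rw [sum_comp_spCoords b (a * h0) h fun x => ψ (∑ i, (x i : k)), hα]
  simp only [Kl, mul_sum, ← sum_add_distrib]
  refine sum_congr rfl fun x _ => ?_
  split_ifs with hx
  · have hχ : ∏ i : Fin (m + 2), (if (i : ℕ) < m + 1 then 1 else ω) (x i : k) =
        ω (x (Fin.last (m + 1))) := by
      simp [Fin.prod_univ_castSucc]
    rw [nsmul_eq_mul, natCast_card_units_sq_eq hF hω₂ hω₁, Units.val_div_eq_div_val,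
      MulChar.apply_div_of_sq_eq_one hω₂, hχ]
    simp only [Units.val_mul, map_mul, MulChar.one_apply_coe, prod_const_one, mul_one]
    ring
  · simp

end FiniteField

/-- **Character values of simple supercuspidal representations of `Sp_{2n}` at affine generic
elements, as a finite-field identity.** For `q` odd, `n ≥ 1` and `a, b, h₀, h₁, …, hₙ ∈ k^×`
(here `h i` denotes `h_{i+1}`),
`Σ_{t∈(k^×)^n} ψ( Σ_{i=1}^{n−1} (tᵢ/t_{i+1})·hᵢ + b·tₙ²·hₙ + a·h₀·t₁^{−2} )
  = Kl_α^{n+1}(ψ; (2,…,2,1,1)) + ω₀(a·h₀)·Kl_α^{n+1}(ψ; (2,…,2,1,1), (𝟙,…,𝟙,ω₀))`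
with `α = a·b·h₁²⋯h_{n−1}²·hₙ·h₀`. -/
theorem char_simple_supercuspidal_Sp {k : Type*} [Field k] [Fintype k] [DecidableEq k]
    (hq : Odd (Fintype.card k))
    (ψ : AddChar k ℂ)
    (ω₀ : MulChar k ℂ) (hω₂ : ω₀ ^ 2 = 1) (hω₁ : ω₀ ≠ 1)
    (n : ℕ) (hn : 1 ≤ n)
    (a b h0 : kˣ) (h : Fin n → kˣ) :
    ∑ t : Fin n → kˣ,
      ψ ((∑ i : Fin (n - 1),
            ((t ⟨i.1, by have := i.isLt; omega⟩ : k) / (t ⟨i.1 + 1, by have := i.isLt; omega⟩ : k))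
              * (h ⟨i.1, by have := i.isLt; omega⟩ : k))
          + (b : k) * (t ⟨n - 1, by omega⟩ : k) ^ 2 * (h ⟨n - 1, by omega⟩ : k)
          + (a : k) * (h0 : k) / (t ⟨0, by omega⟩ : k) ^ 2)
    = Kl ψ (fun i : Fin (n + 1) => if (i : ℕ) < n - 1 then 2 else 1)
        (fun _ => 1)
        (a * b * (∏ i : Fin (n - 1), h ⟨i.1, by have := i.isLt; omega⟩ ^ 2)
          * h ⟨n - 1, by omega⟩ * h0)
      + ω₀ ((a : k) * (h0 : k)) *
        Kl ψ (fun i : Fin (n + 1) => if (i : ℕ) < n - 1 then 2 else 1)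
          (fun i : Fin (n + 1) => if (i : ℕ) < n then 1 else ω₀)
          (a * b * (∏ i : Fin (n - 1), h ⟨i.1, by have := i.isLt; omega⟩ ^ 2)
            * h ⟨n - 1, by omega⟩ * h0) := by
  obtain ⟨m, rfl⟩ : ∃ m, n = m + 1 := ⟨n - 1, by omega⟩
  exact sum_addChar_eq_Kl_add_Kl (FiniteField.ringChar_ne_two_of_odd_card hq) ψ hω₂ hω₁ a b h0 h
end
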